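/- Let g>0, θ∈ℝ, γ>1, k>0, ρ₀>0 be constants, S, Z : ℝ→ℝ C¹ functions, and I₁, I₂, h_w C¹ functions. Suppose M, A, Q : ℝ×ℝ→ℝ are C¹ with M>0, A>0, S−A>0, satisfying ∂ₜA+∂ₓQ=0 and ∂ₜQ+∂ₓ( Q²/A + g I₁ cosθ + A·M c_a²/(γ(S−A)) ) = −gA∂ₓZ + g I₂ cosθ + (M c_a²/(γ(S−A)))·∂ₓA with c_a² = kγ(ρ₀M/(S−A))^{γ−1}, together with the geometric identities ∂ₓ[I₁] = I₂ + A ∂ₓ[h_w] and ∂ₜ[A h_w − I₁] = h_w ∂ₜA. Define the water energy E_w = A u²/2 + g(A h_w − I₁)cosθ + gAZ with u=Q/A, and the water entropy flux H_w = ( E_w + g I₁ cosθ + A·M c_a²/(γ(S−A)) )·u. Then ∂ₜE_w + ∂ₓH_w = −(c_a² M/(γ(S−A)))·∂ₜA. -/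

import Mathlib

/-!
Writing `u = Q/A` and `P = M c_a²/(γ(S-A))` for the air pressure term, the defect
`∂ₜE_w + ∂ₓH_w + P ∂ₜA` is `u` times the momentum equation, plus `g h_w cos θ + g Z + P - u²/2`
times the mass equation, minus `g u cos θ` times the spatial Leibniz identity; the temporal
Leibniz identity is what turns `∂ₜ(A h_w - I₁)` into `h_w ∂ₜA`.
-/

open Real MeasureTheory

/-- Partial derivative with respect to the first (time) variable. -/
noncomputable def pt (f : ℝ → ℝ → ℝ) (t x : ℝ) : ℝ := deriv (fun s => f s x) t

/-- Partial derivative with respect to the second (space) variable. -/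
noncomputable def px (f : ℝ → ℝ → ℝ) (t x : ℝ) : ℝ := deriv (fun y => f t y) x

open Function

lemma hasDerivAt_pt {f : ℝ → ℝ → ℝ} {t x : ℝ} (hf : DifferentiableAt ℝ (uncurry f) (t, x)) :
    HasDerivAt (fun s => f s x) (pt f t x) t := by
  have hslice : DifferentiableAt ℝ (fun s => (s, x)) t :=
    differentiableAt_fun_id.prodMk (differentiableAt_const x)
  exact (hf.comp t hslice).hasDerivAt

lemma hasDerivAt_px {f : ℝ → ℝ → ℝ} {t x : ℝ} (hf : DifferentiableAt ℝ (uncurry f) (t, x)) :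
    HasDerivAt (fun y => f t y) (px f t x) x := by
  have hslice : DifferentiableAt ℝ (fun y => (t, y)) x :=
    (differentiableAt_const t).prodMk differentiableAt_fun_id
  exact (hf.comp x hslice).hasDerivAt

lemma differentiableAt_polytropic_pressure {m a s : ℝ → ℝ} {x k γ ρ₀ : ℝ}
    (hm : DifferentiableAt ℝ m x) (ha : DifferentiableAt ℝ a x) (hs : DifferentiableAt ℝ s x)
    (hγ : γ ≠ 0) (hρ₀ : ρ₀ ≠ 0) (hm0 : m x ≠ 0) (hsa : s x - a x ≠ 0) :
    DifferentiableAt ℝ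
      (fun y => m y * (k * γ * (ρ₀ * m y / (s y - a y)) ^ (γ - 1)) / (γ * (s y - a y))) x := by
  have hvol : DifferentiableAt ℝ (fun y => s y - a y) x := hs.sub ha
  have hdens : DifferentiableAt ℝ (fun y => ρ₀ * m y / (s y - a y)) x :=
    (hm.const_mul ρ₀).div hvol hsa
  exact (hm.mul ((hdens.rpow_const (Or.inl (div_ne_zero (mul_ne_zero hρ₀ hm0) hsa))).const_mul
    (k * γ))).div (hvol.const_mul γ) (mul_ne_zero hγ hsa)

theorem energy_balance_of_momentum_balance {g c : ℝ} {A Q I₁ I₂ hw P : ℝ → ℝ → ℝ}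
    {Z : ℝ → ℝ} {t x : ℝ}
    (hA : DifferentiableAt ℝ (uncurry A) (t, x)) (hQ : DifferentiableAt ℝ (uncurry Q) (t, x))
    (hI₁ : DifferentiableAt ℝ (uncurry I₁) (t, x)) (hhw : DifferentiableAt ℝ (uncurry hw) (t, x))
    (hZ : DifferentiableAt ℝ Z x) (hP : DifferentiableAt ℝ (fun y => P t y) x)
    (hA0 : A t x ≠ 0)
    (hmass : pt A t x + px Q t x = 0)
    (hmom : pt Q t x + px (fun t x => Q t x ^ 2 / A t x + g * I₁ t x * c + A t x * P t x) t x
      = -g * A t x * deriv Z x + g * I₂ t x * c + P t x * px A t x)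
    (hLx : px I₁ t x = I₂ t x + A t x * px hw t x)
    (hLt : pt (fun t x => A t x * hw t x - I₁ t x) t x = hw t x * pt A t x) :
    pt (fun t x => A t x * (Q t x / A t x) ^ 2 / 2 + g * (A t x * hw t x - I₁ t x) * c
        + g * A t x * Z x) t x
      + px (fun t x => (A t x * (Q t x / A t x) ^ 2 / 2 + g * (A t x * hw t x - I₁ t x) * c
        + g * A t x * Z x + g * I₁ t x * c + A t x * P t x) * (Q t x / A t x)) t x
      = -P t x * pt A t x := by
  have hA_t := hasDerivAt_pt hA
  have hQ_t := hasDerivAt_pt hQ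
  have hA_x := hasDerivAt_px hA
  have hQ_x := hasDerivAt_px hQ
  have hI₁_x := hasDerivAt_px hI₁
  have hhw_x := hasDerivAt_px hhw
  have hP_x := hP.hasDerivAt
  have hpot_t : HasDerivAt (fun s => A s x * hw s x - I₁ s x) (hw t x * pt A t x) t :=
    hLt ▸ ((hA_t.fun_mul (hasDerivAt_pt hhw)).fun_sub
      (hasDerivAt_pt hI₁)).differentiableAt.hasDerivAt
  have hu_t := hQ_t.fun_div hA_t hA0
  have hu_x := hQ_x.fun_div hA_x hA0
  have henergy_t := (((hA_t.fun_mul (hu_t.fun_pow 2)).div_const 2).fun_add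
    ((hpot_t.const_mul g).mul_const c)).fun_add ((hA_t.const_mul g).mul_const (Z x))
  have hflux_x := ((((((hA_x.fun_mul (hu_x.fun_pow 2)).div_const 2).fun_add
    ((((hA_x.fun_mul hhw_x).fun_sub hI₁_x).const_mul g).mul_const c)).fun_add
    ((hA_x.const_mul g).fun_mul hZ.hasDerivAt)).fun_add
    ((hI₁_x.const_mul g).mul_const c)).fun_add (hA_x.fun_mul hP_x)).fun_mul hu_x
  have hmomflux_x := (((hQ_x.fun_pow 2).fun_div hA_x hA0).fun_add
    ((hI₁_x.const_mul g).mul_const c)).fun_add (hA_x.fun_mul hP_x)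
  rw [pt, henergy_t.deriv, px, hflux_x.deriv]
  rw [px, hmomflux_x.deriv] at hmom
  linear_combination (norm := skip) (Q t x / A t x) * hmom
    + (g * c * hw t x + g * Z x + P t x - (Q t x / A t x) ^ 2 / 2) * hmass
    - g * c * (Q t x / A t x) * hLx
  norm_num only
  field_simp
  ring

theorem water_energy_balance_general
    (g θ γ k ρ₀ : ℝ) (hγ : 1 < γ) (hρ₀ : 0 < ρ₀)
    (S Z : ℝ → ℝ) (hSreg : ContDiff ℝ 1 S) (hZreg : ContDiff ℝ 1 Z)
    (I₁ I₂ hw : ℝ → ℝ → ℝ)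
    (hI₁reg : ContDiff ℝ 1 (Function.uncurry I₁))
    (hhwreg : ContDiff ℝ 1 (Function.uncurry hw))
    (M A Q : ℝ → ℝ → ℝ)
    (hMreg : ContDiff ℝ 1 (Function.uncurry M))
    (hAreg : ContDiff ℝ 1 (Function.uncurry A))
    (hQreg : ContDiff ℝ 1 (Function.uncurry Q))
    (hMpos : ∀ t x, 0 < M t x) (hApos : ∀ t x, 0 < A t x)
    (hSA : ∀ t x, 0 < S x - A t x)
    (ca2 : ℝ → ℝ → ℝ)
    (hca2 : ∀ t x, ca2 t x = k * γ * (ρ₀ * M t x / (S x - A t x)) ^ (γ - 1))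
    (hmass : ∀ t x, pt A t x + px Q t x = 0)
    (hmom : ∀ t x,
      pt Q t x + px (fun t x => Q t x ^ 2 / A t x + g * I₁ t x * Real.cos θ
          + A t x * (M t x * ca2 t x / (γ * (S x - A t x)))) t x
        = -g * A t x * deriv Z x + g * I₂ t x * Real.cos θ
          + M t x * ca2 t x / (γ * (S x - A t x)) * px A t x)
    (hLeibnizX : ∀ t x, px I₁ t x = I₂ t x + A t x * px hw t x)
    (hLeibnizT : ∀ t x,
      pt (fun t x => A t x * hw t x - I₁ t x) t x = hw t x * pt A t x)
    (u : ℝ → ℝ → ℝ) (hu : ∀ t x, u t x = Q t x / A t x)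
    (Ew Hw : ℝ → ℝ → ℝ)
    (hEw : ∀ t x, Ew t x = A t x * u t x ^ 2 / 2
        + g * (A t x * hw t x - I₁ t x) * Real.cos θ + g * A t x * Z x)
    (hHw : ∀ t x, Hw t x = (Ew t x + g * I₁ t x * Real.cos θ
        + A t x * (M t x * ca2 t x / (γ * (S x - A t x)))) * u t x) :
    ∀ t x, pt Ew t x + px Hw t x
      = -(ca2 t x * M t x / (γ * (S x - A t x))) * pt A t x := by
  intro t x
  have hdiff {f : ℝ → ℝ → ℝ} (hf : ContDiff ℝ 1 (uncurry f)) :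
      DifferentiableAt ℝ (uncurry f) (t, x) :=
    (hf.differentiable one_ne_zero).differentiableAt
  have hP : DifferentiableAt ℝ (fun y => M t y * ca2 t y / (γ * (S y - A t y))) x := by
    simp only [hca2]
    exact differentiableAt_polytropic_pressure (hasDerivAt_px (hdiff hMreg)).differentiableAt
      (hasDerivAt_px (hdiff hAreg)).differentiableAt (hSreg.differentiable one_ne_zero x)
      (zero_lt_one.trans hγ).ne' hρ₀.ne' (hMpos t x).ne' (hSA t x).ne'
  have hEw' : Ew = fun t x => A t x * (Q t x / A t x) ^ 2 / 2
      + g * (A t x * hw t x - I₁ t x) * Real.cos θ + g * A t x * Z x := by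
    funext t x
    rw [hEw, hu]
  have hHw' : Hw = fun t x => (A t x * (Q t x / A t x) ^ 2 / 2
      + g * (A t x * hw t x - I₁ t x) * Real.cos θ + g * A t x * Z x + g * I₁ t x * Real.cos θ
      + A t x * (M t x * ca2 t x / (γ * (S x - A t x)))) * (Q t x / A t x) := by
    funext t x
    rw [hHw, hEw, hu]
  rw [hEw', hHw', mul_comm (ca2 t x)]
  exact energy_balance_of_momentum_balance (hdiff hAreg) (hdiff hQreg) (hdiff hI₁reg)
    (hdiff hhwreg) (hZreg.differentiable one_ne_zero x) hP (hApos t x).ne' (hmass t x)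
    (hmom t x) (hLeibnizX t x) (hLeibnizT t x)

/-- for C¹ solutions of the water-layer equations (with the
geometric identities `∂ₓ I₁ = I₂ + A ∂ₓ h_w` and `∂ₜ(A h_w - I₁) = h_w ∂ₜ A`),
the water energy `E_w = A u²/2 + g (A h_w - I₁) cos θ + g A Z` and the water
entropy flux `H_w = (E_w + g I₁ cos θ + A M c_a²/(γ(S-A))) u` satisfy
`∂ₜ E_w + ∂ₓ H_w = -(c_a² M/(γ(S-A))) ∂ₜ A`. -/
theorem water_energy_balance
    (g θ γ k ρ₀ : ℝ) (hg : 0 < g) (hγ : 1 < γ) (hk : 0 < k) (hρ₀ : 0 < ρ₀)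
    (S Z : ℝ → ℝ) (hSreg : ContDiff ℝ 1 S) (hZreg : ContDiff ℝ 1 Z)
    (I₁ I₂ hw : ℝ → ℝ → ℝ)
    (hI₁reg : ContDiff ℝ 1 (Function.uncurry I₁))
    (hI₂reg : ContDiff ℝ 1 (Function.uncurry I₂))
    (hhwreg : ContDiff ℝ 1 (Function.uncurry hw))
    (M A Q : ℝ → ℝ → ℝ)
    (hMreg : ContDiff ℝ 1 (Function.uncurry M))
    (hAreg : ContDiff ℝ 1 (Function.uncurry A))
    (hQreg : ContDiff ℝ 1 (Function.uncurry Q))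
    (hMpos : ∀ t x, 0 < M t x) (hApos : ∀ t x, 0 < A t x)
    (hSA : ∀ t x, 0 < S x - A t x)
    (ca2 : ℝ → ℝ → ℝ)
    (hca2 : ∀ t x, ca2 t x = k * γ * (ρ₀ * M t x / (S x - A t x)) ^ (γ - 1))
    (hmass : ∀ t x, pt A t x + px Q t x = 0)
    (hmom : ∀ t x,
      pt Q t x + px (fun t x => Q t x ^ 2 / A t x + g * I₁ t x * Real.cos θ
          + A t x * (M t x * ca2 t x / (γ * (S x - A t x)))) t x
        = -g * A t x * deriv Z x + g * I₂ t x * Real.cos θ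
          + M t x * ca2 t x / (γ * (S x - A t x)) * px A t x)
    (hLeibnizX : ∀ t x, px I₁ t x = I₂ t x + A t x * px hw t x)
    (hLeibnizT : ∀ t x,
      pt (fun t x => A t x * hw t x - I₁ t x) t x = hw t x * pt A t x)
    (u : ℝ → ℝ → ℝ) (hu : ∀ t x, u t x = Q t x / A t x)
    (Ew Hw : ℝ → ℝ → ℝ)
    (hEw : ∀ t x, Ew t x = A t x * u t x ^ 2 / 2
        + g * (A t x * hw t x - I₁ t x) * Real.cos θ + g * A t x * Z x)
    (hHw : ∀ t x, Hw t x = (Ew t x + g * I₁ t x * Real.cos θ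
        + A t x * (M t x * ca2 t x / (γ * (S x - A t x)))) * u t x) :
    ∀ t x, pt Ew t x + px Hw t x
      = -(ca2 t x * M t x / (γ * (S x - A t x))) * pt A t x :=
  water_energy_balance_general g θ γ k ρ₀ hγ hρ₀ S Z hSreg hZreg I₁ I₂ hw hI₁reg hhwreg M A Q hMreg
    hAreg hQreg hMpos hApos hSA ca2 hca2 hmass hmom hLeibnizX hLeibnizT u hu Ew Hw hEw hHw
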